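/- arXiv:2502.08424 — 3 statements merged into one kernel-verified Lean document; each statement's English description precedes it below -/
import Mathlib

section
/- Let S = (s_0,…,s_{k-1}) be a cyclic binary sequence of length k whose n-windows form a covering code of radius R, with k odd. Define the k×k array A whose row i (0 ≤ i ≤ k-1) is the cyclic shift E^{T_i} S where T_i = Σ_{ℓ=0}^{i} ℓ = i(i+1)/2, i.e. A(i, j) = s_{(j + T_i) mod k}. Then for every 2×n binary matrix B = (X; Y) there exist row index r and column index c (rows taken modulo k) such that the 2×n window of A with entries A(r, c+t), A(r+1, c+t), 0 ≤ t < n, is within Hamming distance 2R of B. -/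
/-!
Row `r` of the array is `s` shifted by the triangular number `T r = r(r+1)/2`, and consecutive
rows `r`, `r + 1` differ by the shift `T (r + 1) - T r = r + 1`. Since `r + 1` runs through all
residues modulo `k`, any pair of windows `s(i + ·)`, `s(j + ·)` appears as a vertically aligned
pair of windows in rows `r`, `r + 1` with `r + 1 ≡ j - i`. Taking `i`, `j` to be covering windows
of `X`, `Y` gives distance at most `R + R`.
-/

theorem Nat.succ_mul_succ_succ_div_two (r : ℕ) :
    (r + 1) * (r + 2) / 2 = r * (r + 1) / 2 + (r + 1) := by
  rw [show (r + 1) * (r + 2) = r * (r + 1) + 2 * (r + 1) by ring,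
    Nat.add_mul_div_left _ _ two_pos]

theorem ZMod.exists_consecutive_triangular_shifts {k : ℕ} [NeZero k] (a b : ZMod k) :
    ∃ r c : ℕ, ∀ t : ℕ, ((c + t + r * (r + 1) / 2 : ℕ) : ZMod k) = a + t ∧
      ((c + t + (r + 1) * (r + 2) / 2 : ℕ) : ZMod k) = b + t := by
  set r := (b - a - 1).val
  set c := (a - ((r * (r + 1) / 2 : ℕ) : ZMod k)).val
  have hr : (r : ZMod k) = b - a - 1 := ZMod.natCast_zmod_val _
  have hc : (c : ZMod k) = a - ((r * (r + 1) / 2 : ℕ) : ZMod k) := ZMod.natCast_zmod_val _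
  refine ⟨r, c, fun t => ⟨?_, ?_⟩⟩
  · push_cast [hc]
    ring
  · rw [Nat.succ_mul_succ_succ_div_two]
    push_cast [hc, hr]
    ring

/-- Shift construction for odd `k`: let `s` be an `(n,R)`-covering sequence of
length `k`, and form the `k × k` array whose row `i` is `s` shifted left by
`T_i = i(i+1)/2`. Then every `2 × n` binary matrix `(X; Y)` is within
Hamming distance `2R` of some `2 × n` window of the array. -/
theorem shifts_covering_2xn (k n R : ℕ) (hodd : Odd k)
    (s : ZMod k → ZMod 2)
    (hcov : ∀ x : Fin n → ZMod 2, ∃ i : ZMod k,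
      hammingDist x (fun t : Fin n => s (i + (t : ℕ))) ≤ R) :
    ∀ X Y : Fin n → ZMod 2, ∃ r c : ℕ,
      hammingDist X (fun t : Fin n => s (((c + (t : ℕ) + r * (r + 1) / 2 : ℕ)) : ZMod k)) +
      hammingDist Y (fun t : Fin n => s (((c + (t : ℕ) + (r + 1) * (r + 2) / 2 : ℕ)) : ZMod k))
        ≤ 2 * R := by
  intro X Y
  have : NeZero k := ⟨hodd.pos.ne'⟩
  obtain ⟨i, hi⟩ := hcov X
  obtain ⟨j, hj⟩ := hcov Y
  obtain ⟨r, c, hrc⟩ := ZMod.exists_consecutive_triangular_shifts i j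
  refine ⟨r, c, ?_⟩
  simp only [fun t => (hrc t).1, fun t => (hrc t).2]
  omega
end

section
/- Let S be a cyclic binary sequence of length k whose n-windows form a covering code of radius R, and let T = (t_1,…,t_{k^{m-1}}) be a cyclic sequence over ZMod k in which every (m-1)-tuple over ZMod k occurs as a window of m-1 consecutive entries (a span m-1 de Bruijn sequence over an alphabet of size k). Define the k^{m-1} × k array A whose row i equals S cyclically shifted by t_1 + t_2 + ⋯ + t_i positions (row 0 unshifted), rows indexed cyclically. Then for every m×n binary matrix B there is an m×n contiguous window X of A (rows cyclic modulo k^{m-1}, columns cyclic modulo k) with Hamming distance d(B,X) ≤ mR. -/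
/-- De Bruijn shift construction: let `s` be an `(n,R)`-covering sequence of
length `k` and `T` a span `m-1` de Bruijn sequence over `ZMod k`. Form the
array whose row `r` is `s` shifted by `t_1 + ⋯ + t_r`. Then every `m × n`
binary matrix is within Hamming distance `mR` of some `m × n` window. -/
theorem deBruijn_shifts_covering (k n m R N : ℕ) (hm : 0 < m) (hk : 0 < k)
    (hN : N = k ^ (m - 1))
    (s : ZMod k → ZMod 2) (T : ZMod N → ZMod k)
    (hcov : ∀ x : Fin n → ZMod 2, ∃ i : ZMod k,
      hammingDist x (fun t : Fin n => s (i + (t : ℕ))) ≤ R)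
    (hdB : ∀ w : Fin (m - 1) → ZMod k, ∃ i : ZMod N,
      ∀ l : Fin (m - 1), T (i + (l : ℕ)) = w l) :
    ∀ B : Fin m × Fin n → ZMod 2, ∃ (r : ℕ) (c : ZMod k),
      hammingDist B
        (fun p : Fin m × Fin n =>
          s (c + ((p.2 : ℕ) : ZMod k) +
            ∑ j ∈ Finset.range (r + (p.1 : ℕ)), T ((j + 1 : ℕ)))) ≤ m * R := by
  intro B
  haveI : NeZero N := ⟨by subst hN; positivity⟩
  choose cf hcf using fun a : Fin m => hcov (fun t => B (a, t))
  set w : Fin (m - 1) → ZMod k := fun l =>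
    cf ⟨l.1 + 1, by omega⟩ - cf ⟨l.1, by omega⟩ with hw
  obtain ⟨i, hi⟩ := hdB w
  set r := (i - 1).val with hrdef
  have hr1 : ((r + 1 : ℕ) : ZMod N) = i := by
    push_cast [hrdef, ZMod.natCast_val, ZMod.cast_id]; ring
  set f : ℕ → ZMod k := fun j => T ((j + 1 : ℕ)) with hf
  have key : ∀ l, (hl : l < m) → ∑ j ∈ Finset.range (r + l), f j
      = ∑ j ∈ Finset.range r, f j + (cf ⟨l, hl⟩ - cf ⟨0, hm⟩) := by
    intro l
    induction l with
    | zero => simp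
    | succ l ih =>
      intro hl
      have hl' : l < m := by omega
      have hlm : l < m - 1 := by omega
      rw [show r + (l + 1) = (r + l) + 1 by ring, Finset.sum_range_succ, ih hl']
      have hfv : f (r + l) = w ⟨l, hlm⟩ := by
        rw [← hi ⟨l, hlm⟩]
        show T _ = T _
        congr 1
        rw [← hr1]
        push_cast
        ring
      rw [hfv, hw]
      ring_nf
  refine ⟨r, cf ⟨0, hm⟩ - ∑ j ∈ Finset.range r, f j, ?_⟩
  have hX : (fun p : Fin m × Fin n =>
      s (cf ⟨0, hm⟩ - ∑ j ∈ Finset.range r, f j + ((p.2 : ℕ) : ZMod k) +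
        ∑ j ∈ Finset.range (r + (p.1 : ℕ)), T ((j + 1 : ℕ))))
      = fun p : Fin m × Fin n => s (cf p.1 + ((p.2 : ℕ) : ZMod k)) := by
    funext p
    congr 1
    have := key p.1 p.1.2
    simp only [Fin.eta] at this
    rw [show (∑ j ∈ Finset.range (r + (p.1 : ℕ)), T ((j + 1 : ℕ))) =
      ∑ j ∈ Finset.range (r + (p.1 : ℕ)), f j from rfl, this]
    ring
  rw [hX]
  have hsplit : hammingDist B (fun p : Fin m × Fin n => s (cf p.1 + ((p.2 : ℕ) : ZMod k)))
      = ∑ a : Fin m, hammingDist (fun t => B (a, t))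
          (fun t : Fin n => s (cf a + ((t : ℕ) : ZMod k))) := by
    simp [hammingDist, Finset.card_filter, Fintype.sum_prod_type]
  rw [hsplit]
  calc ∑ a : Fin m, hammingDist (fun t => B (a, t))
        (fun t : Fin n => s (cf a + ((t : ℕ) : ZMod k)))
      ≤ ∑ _a : Fin m, R := Finset.sum_le_sum fun a _ => hcf a
    _ = m * R := by simp [Finset.sum_const, mul_comm]
end

section
/- Let (c_1,…,c_n) ∈ F_2^n with c_i = 0 for 1 ≤ i ≤ 2R+1 (where 2R+1 ≤ n). Let a, b : ℕ → F_2 satisfy a_k = Σ_{i=1}^n c_i a_{k-i} and b_k = Σ_{i=1}^n c_i b_{k-i} + 1 for k ≥ n. If a and b agree on a window of length n starting at position j (a_{j+t} = b_{j+t} for 0 ≤ t < n), then the next 2R+1 symbols are complementary: b_{j+n+t} = a_{j+n+t} + 1 for 0 ≤ t ≤ 2R. -/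
/-- If the first `2R+1` feedback coefficients vanish, `a` satisfies the
linear recursion, `b` the affine one, and `a, b` agree on a window of length
`n` starting at `j`, then the next `2R+1` symbols are complementary. -/
theorem next_symbols_complementary (n R : ℕ) (c : ℕ → ZMod 2)
    (hR : 2 * R + 1 ≤ n)
    (hc : ∀ i, 1 ≤ i → i ≤ 2 * R + 1 → c i = 0)
    (a b : ℕ → ZMod 2)
    (ha : ∀ k, n ≤ k → a k = ∑ i ∈ Finset.Icc 1 n, c i * a (k - i))
    (hb : ∀ k, n ≤ k → b k = ∑ i ∈ Finset.Icc 1 n, c i * b (k - i) + 1)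
    (j : ℕ) (hagree : ∀ t, t < n → a (j + t) = b (j + t)) :
    ∀ t, t ≤ 2 * R → b (j + n + t) = a (j + n + t) + 1 := by
  intro t ht
  have hk : n ≤ j + n + t := by omega
  rw [ha _ hk, hb _ hk]
  congr 1
  refine Finset.sum_congr rfl fun i hi => ?_
  simp only [Finset.mem_Icc] at hi
  by_cases h : i ≤ 2 * R + 1
  · rw [hc i hi.1 h]; ring
  · have h1 : j + n + t - i = j + (n + t - i) := by omega
    rw [h1, hagree (n + t - i) (by omega)]
end
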